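/- arXiv:1401.8105 — 6 statements merged into one kernel-verified Lean document; each statement's English description precedes it below -/
import Mathlib

section
/- If C is a directed partial order and V an ultrafilter on ω with V Tukey reducible to C (ordered by ≥), then there exists a monotone cofinal map f : C → V, i.e., a map that reverses order appropriately (X ≥ Y implies f(X) ⊆ f(Y)) and whose image of any cofinal set is cofinal. -/
/-!
Replace a Tukey map `g` by its downward hull `c ↦ ⋃ d ≤ c, g d`, which is monotone and still
lands in the filter. A map is cofinal exactly when every `A ∈ V` contains `g d` for all `d` below
some `c` (otherwise `{d | ¬ g d ⊆ A}` is a cofinal set missing `A`), and this property passes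
from `g` to its hull.
-/

namespace Tukey

variable {C α : Type*} [Preorder C]

/-- `g` sends every cofinal subset of `(C, ≥)` to a cofinal subset of `(F, ⊇)`. -/
def IsCofinalMap (F : Filter α) (g : C → Set α) : Prop :=
  ∀ D : Set C, (∀ c : C, ∃ d ∈ D, d ≤ c) → ∀ A ∈ F, ∃ d ∈ D, g d ⊆ A

theorem isCofinalMap_iff {F : Filter α} {g : C → Set α} :
    IsCofinalMap F g ↔ ∀ A ∈ F, ∃ c, ∀ d ≤ c, g d ⊆ A := by
  constructor
  · intro hg A hA
    by_contra! h
    obtain ⟨d, hdA, hd⟩ := hg {d | ¬ g d ⊆ A} (fun c => (h c).imp fun _ => And.symm) A hA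
    exact hdA hd
  · intro hg D hD A hA
    obtain ⟨c, hc⟩ := hg A hA
    obtain ⟨d, hdD, hdc⟩ := hD c
    exact ⟨d, hdD, hc d hdc⟩

def lowerHull (g : C → Set α) (c : C) : Set α :=
  ⋃ d ≤ c, g d

theorem subset_lowerHull (g : C → Set α) (c : C) : g c ⊆ lowerHull g c :=
  Set.subset_biUnion_of_mem (u := g) le_rfl

theorem lowerHull_mono (g : C → Set α) : Monotone (lowerHull g) :=
  fun _ _ hxy => Set.biUnion_mono (fun _ hd => le_trans hd hxy) fun _ _ => le_rfl

theorem lowerHull_subset_iff {g : C → Set α} {c : C} {A : Set α} :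
    lowerHull g c ⊆ A ↔ ∀ d ≤ c, g d ⊆ A :=
  Set.iUnion₂_subset_iff

theorem isCofinalMap_lowerHull {F : Filter α} {g : C → Set α} (hg : IsCofinalMap F g) :
    IsCofinalMap F (lowerHull g) := by
  refine isCofinalMap_iff.2 fun A hA => ?_
  obtain ⟨c, hc⟩ := isCofinalMap_iff.1 hg A hA
  exact ⟨c, fun d hdc => (lowerHull_mono g hdc).trans (lowerHull_subset_iff.2 hc)⟩

end Tukey

theorem stmt_2_general {C : Type} [PartialOrder C]
    (V : Ultrafilter ℕ)
    (hT : ∃ g : C → Set ℕ, (∀ c : C, g c ∈ V) ∧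
      ∀ D : Set C, (∀ c : C, ∃ d ∈ D, d ≤ c) →
        ∀ A ∈ V, ∃ d ∈ D, g d ⊆ A) :
    ∃ f : C → Set ℕ,
      (∀ c : C, f c ∈ V) ∧
      (∀ x y : C, y ≤ x → f y ⊆ f x) ∧
      (∀ D : Set C, (∀ c : C, ∃ d ∈ D, d ≤ c) →
        ∀ A ∈ V, ∃ d ∈ D, f d ⊆ A) := by
  obtain ⟨g, hgV, hg⟩ := hT
  exact ⟨Tukey.lowerHull g, fun c => Filter.mem_of_superset (hgV c) (Tukey.subset_lowerHull g c),
    fun _ _ hyx => Tukey.lowerHull_mono g hyx, Tukey.isCofinalMap_lowerHull hg⟩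

/-- If `C` is a directed partial order (directed downwards, so that `(C, ≥)` is
directed upwards, as for a filter base ordered by `⊇`) and `V` is an ultrafilter on `ω` that
is Tukey reducible to `(C, ≥)`, then there is a *monotone* cofinal map `f : C → V`:
`f` takes values in `V`, satisfies `f y ⊆ f x` whenever `y ≤ x`, and sends every cofinal
subset of `(C, ≥)` to a cofinal subset of `(V, ⊇)`. -/
theorem stmt_2 {C : Type} [PartialOrder C]
    (hdir : ∀ a b : C, ∃ c : C, c ≤ a ∧ c ≤ b)
    (V : Ultrafilter ℕ)
    (hT : ∃ g : C → Set ℕ, (∀ c : C, g c ∈ V) ∧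
      ∀ D : Set C, (∀ c : C, ∃ d ∈ D, d ≤ c) →
        ∀ A ∈ V, ∃ d ∈ D, g d ⊆ A) :
    ∃ f : C → Set ℕ,
      (∀ c : C, f c ∈ V) ∧
      (∀ x y : C, y ≤ x → f y ⊆ f x) ∧
      (∀ D : Set C, (∀ c : C, ∃ d ∈ D, d ≤ c) →
        ∀ A ∈ V, ∃ d ∈ D, f d ⊆ A) :=
  stmt_2_general V hT
end

section
/- A nonprincipal ultrafilter U on ω is selective (every f : ω → ω is constant or one-to-one on a set in U) if and only if U is Ramsey (every 2-coloring of pairs from ω has a monochromatic set in U). -/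
/-!
Ramsey implies selective by colouring a pair `a < b` according to whether `f a = f b`.

Conversely, given a colouring `c`, let `i n` be the colour with `{m | c n m = i n} ∈ U` and
restrict to a set of `U` on which `i` is constant; it then suffices to diagonalise the sequence
`A n = {m | c n m = i n}`, i.e. to find `X ∈ U` with `b ∈ A a` whenever `a < b` lie in `X`.
Selectivity applied to `m ↦ min {n | m ∉ A n ∩ (n, ∞)}` gives a set of `U` almost contained in
every `A n` (so `U` is a P-point), hence thresholds `G n` beyond which it lies inside `A n`.
Selectivity applied to the block index of `m` in a partition of `ℕ` into fast-growing intervals,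
together with a choice of parity, gives a set of `U` whose points lie at least two blocks apart,
so each of them lies beyond the threshold of every smaller one.
-/

open Set Filter

def breakpoints (G : ℕ → ℕ) : ℕ → ℕ
  | 0 => 0
  | k + 1 => max (breakpoints G k + 1) ((Finset.range (breakpoints G k)).sup G)

theorem breakpoints_strictMono (G : ℕ → ℕ) : StrictMono (breakpoints G) :=
  strictMono_nat_of_lt_succ fun _ => Nat.lt_of_lt_of_le (Nat.lt_succ_self _) (le_max_left _ _)

theorem le_breakpoints_add_two {G : ℕ → ℕ} {a k : ℕ} (h : a < breakpoints G (k + 1)) :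
    G a ≤ breakpoints G (k + 2) :=
  le_max_of_le_right (Finset.le_sup (Finset.mem_range.2 h))

theorem exists_breakpoints_le_lt (G : ℕ → ℕ) (m : ℕ) :
    ∃ k, breakpoints G k ≤ m ∧ m < breakpoints G (k + 1) := by
  have hex : ∃ j, m < breakpoints G j :=
    ⟨m + 1, Nat.lt_of_lt_of_le m.lt_succ_self ((breakpoints_strictMono G).id_le _)⟩
  obtain ⟨k, hk⟩ : ∃ k, Nat.find hex = k + 1 :=
    Nat.exists_eq_succ_of_ne_zero fun h => by simp [Nat.find_eq_zero, breakpoints] at h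
  exact ⟨k, not_lt.1 (Nat.find_min hex (by omega)), hk ▸ Nat.find_spec hex⟩

namespace Ultrafilter

def IsSelective (U : Ultrafilter ℕ) : Prop :=
  ∀ f : ℕ → ℕ, ∃ X ∈ U, (∀ a ∈ X, ∀ b ∈ X, f a = f b) ∨ InjOn f X

def IsRamsey (U : Ultrafilter ℕ) : Prop :=
  ∀ c : ℕ → ℕ → Fin 2, ∃ X ∈ U, ∃ i : Fin 2, ∀ a ∈ X, ∀ b ∈ X, a < b → c a b = i

theorem exists_preimage_singleton_mem {α β : Type*} [Finite β] (U : Ultrafilter α) (g : α → β) :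
    ∃ j, g ⁻¹' {j} ∈ U := by
  obtain ⟨j, hj⟩ := (U.map g).eq_pure_of_finite
  exact ⟨j, mem_map.1 (hj ▸ mem_pure.2 rfl)⟩

variable {U : Ultrafilter ℕ}

theorem Ioi_mem (hU : ∀ s : Set ℕ, s.Finite → s ∉ U) (n : ℕ) : Ioi n ∈ U :=
  compl_notMem_iff.1 (compl_Ioi (a := n) ▸ hU _ (finite_Iic n))

theorem IsSelective.exists_injOn (hsel : U.IsSelective) {f : ℕ → ℕ}
    (hf : ∀ n, f ⁻¹' {n} ∉ U) : ∃ X ∈ U, InjOn f X := by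
  obtain ⟨X, hX, hconst | hinj⟩ := hsel f
  · obtain ⟨a, ha⟩ := nonempty_of_mem hX
    exact absurd (mem_of_superset hX fun b hb => hconst b hb a ha) (hf (f a))
  · exact ⟨X, hX, hinj⟩

theorem IsSelective.exists_diff_finite (hsel : U.IsSelective) (hU : ∀ s : Set ℕ, s.Finite → s ∉ U)
    {A : ℕ → Set ℕ} (hA : ∀ n, A n ∈ U) : ∃ X ∈ U, ∀ n, (X \ A n).Finite := by
  classical
  have hleave : ∀ m, ∃ n, m ∉ A n ∩ Ioi n := fun m => ⟨m, fun h => lt_irrefl m h.2⟩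
  set f : ℕ → ℕ := fun m => Nat.find (hleave m)
  have hfib : ∀ n, f ⁻¹' {n} ∉ U := fun n hn => by
    obtain ⟨m, hmf, hmA⟩ := nonempty_of_mem (inter_mem hn (inter_mem (hA n) (Ioi_mem hU n)))
    rw [← mem_singleton_iff.1 hmf] at hmA
    exact Nat.find_spec (hleave m) hmA
  obtain ⟨X, hX, hinj⟩ := hsel.exists_injOn hfib
  refine ⟨X, hX, fun n => ?_⟩
  have hsub : X \ A n ⊆ X ∩ f ⁻¹' Iic n :=
    fun m hm => ⟨hm.1, Nat.find_le fun h => hm.2 h.1⟩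
  refine Finite.subset (Finite.of_finite_image ?_ (hinj.mono inter_subset_left)) hsub
  exact (finite_Iic n).subset (image_subset_iff.2 fun m hm => hm.2)

theorem IsSelective.exists_sparse (hsel : U.IsSelective) (hU : ∀ s : Set ℕ, s.Finite → s ∉ U)
    (G : ℕ → ℕ) : ∃ X ∈ U, ∀ a ∈ X, ∀ b ∈ X, a < b → G a ≤ b := by
  have ht := breakpoints_strictMono G
  choose idx hidx using exists_breakpoints_le_lt G
  have hfib : ∀ k, idx ⁻¹' {k} ∉ U := fun k =>
    hU _ ((finite_Iio _).subset fun m hm => mem_singleton_iff.1 hm ▸ (hidx m).2)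
  obtain ⟨X, hX, hinj⟩ := hsel.exists_injOn hfib
  obtain ⟨p, hp⟩ := exists_preimage_singleton_mem U fun m => Even (idx m)
  refine ⟨X ∩ _, inter_mem hX hp, fun a ha b hb hab => ?_⟩
  have hle : idx a < idx b + 1 := ht.lt_iff_lt.1 ((hidx a).1.trans_lt (hab.trans (hidx b).2))
  have hne : idx a ≠ idx b := fun h => hab.ne (hinj ha.1 hb.1 h)
  have hpar : Even (idx a) ↔ Even (idx b) := Iff.of_eq (ha.2.trans hb.2.symm)
  have htwo : idx a + 2 ≤ idx b := by
    rw [Nat.even_iff, Nat.even_iff] at hpar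
    omega
  calc G a ≤ breakpoints G (idx a + 2) := le_breakpoints_add_two (hidx a).2
    _ ≤ breakpoints G (idx b) := ht.monotone htwo
    _ ≤ b := (hidx b).1

theorem IsSelective.exists_diagonal (hsel : U.IsSelective) (hU : ∀ s : Set ℕ, s.Finite → s ∉ U)
    {A : ℕ → Set ℕ} (hA : ∀ n, A n ∈ U) : ∃ X ∈ U, ∀ a ∈ X, ∀ b ∈ X, a < b → b ∈ A a := by
  obtain ⟨Y, hY, hfin⟩ := hsel.exists_diff_finite hU hA
  choose G hG using fun n => (hfin n).bddAbove
  obtain ⟨Z, hZ, hsparse⟩ := hsel.exists_sparse hU (G · + 1)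
  refine ⟨Y ∩ Z, inter_mem hY hZ, fun a ha b hb hab => ?_⟩
  by_contra hbA
  have hbG : b ≤ G a := hG a ⟨hb.1, hbA⟩
  have hGb : G a + 1 ≤ b := hsparse a ha.2 b hb.2 hab
  omega

theorem IsSelective.isRamsey (hsel : U.IsSelective) (hU : ∀ s : Set ℕ, s.Finite → s ∉ U) :
    U.IsRamsey := by
  intro c
  choose i hi using fun n => exists_preimage_singleton_mem U (c n)
  obtain ⟨i₀, hi₀⟩ := exists_preimage_singleton_mem U i
  obtain ⟨X, hX, hdiag⟩ := hsel.exists_diagonal hU hi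
  exact ⟨X ∩ i ⁻¹' {i₀}, inter_mem hX hi₀, i₀,
    fun a ha b hb hab => (hdiag a ha.1 b hb.1 hab).trans ha.2⟩

theorem IsRamsey.isSelective (hram : U.IsRamsey) : U.IsSelective := by
  intro f
  obtain ⟨X, hX, i, hi⟩ := hram fun a b => if f a = f b then 0 else 1
  have hlt : ∀ a ∈ X, ∀ b ∈ X, a < b → (f a = f b ↔ i = 0) := fun a ha b hb hab => by
    rw [← hi a ha b hb hab]
    split_ifs <;> simp [*]
  have hne : ∀ a ∈ X, ∀ b ∈ X, a ≠ b → (f a = f b ↔ i = 0) := fun a ha b hb hab => by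
    rcases hab.lt_or_gt with hab | hab
    · exact hlt a ha b hb hab
    · exact eq_comm.trans (hlt b hb a ha hab)
  refine ⟨X, hX, ?_⟩
  by_cases h0 : i = 0
  · refine Or.inl fun a ha b hb => ?_
    rcases eq_or_ne a b with rfl | hab
    · rfl
    · exact (hne a ha b hb hab).2 h0
  · exact Or.inr fun a ha b hb hfab => by_contra fun hab => h0 ((hne a ha b hb hab).1 hfab)

theorem isSelective_iff_isRamsey (hU : ∀ s : Set ℕ, s.Finite → s ∉ U) :
    U.IsSelective ↔ U.IsRamsey :=
  ⟨fun hsel => hsel.isRamsey hU, IsRamsey.isSelective⟩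

end Ultrafilter

/-- A nonprincipal ultrafilter on ω is selective (every function is constant
or injective on some member) iff it is Ramsey (every 2-coloring of pairs has a monochromatic
member). -/
theorem stmt_5 (U : Ultrafilter ℕ) (hnp : ∀ A : Set ℕ, A.Finite → A ∉ U) :
    (∀ f : ℕ → ℕ, ∃ X ∈ U, (∀ a ∈ X, ∀ b ∈ X, f a = f b) ∨ Set.InjOn f X) ↔
    (∀ c : ℕ → ℕ → Fin 2, ∃ X ∈ U, ∃ i : Fin 2,
      ∀ a ∈ X, ∀ b ∈ X, a < b → c a b = i) :=
  Ultrafilter.isSelective_iff_isRamsey hnp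
end

section
/- Finite Erdős–Rado canonization theorem: for all n ≤ l there exists m > l such that for every equivalence relation E on [m]^n there is an l-element subset s ⊆ m and a set I ⊆ n with E restricted to [s]^n equal to E_I restricted to [s]^n. -/
/-!
By Ramsey's theorem for `2n`-sets, coloured by which pairs of their `n`-subsets (described by
positions) are `E`-equivalent, we pass to a large set on which the equivalence of two `n`-sets
depends only on the order type of the pair. Let `I` be the set of positions `i` such that two
`n`-sets differing exactly in their `i`-th element are inequivalent; by order invariance this
does not depend on the pair. Now compare `b` and `c` at the largest position `i` where they
differ, say `b i < c i`. Then `c i ∉ b`, so after spreading the pair out, `c i` can be moved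
alone without changing the order type of the pair; hence `b ~ c` forces `i ∉ I`. If `i ∉ I`,
replacing `b i` by `c i` preserves the class of `b`, and we conclude by induction.
-/

open Finset

section Ramsey

variable {C : Type*}

theorem exists_minHomogeneous_subset (r : ℕ)
    (ih : ∀ L, ∃ M, ∀ {α : Type} [LinearOrder α] (V : Finset α) (χ : Finset α → C), M ≤ #V →
      ∃ H ⊆ V, #H = L ∧ ∃ c, ∀ x ⊆ H, #x = r → χ x = c) (N : ℕ) :
    ∃ M, ∀ {α : Type} [LinearOrder α] (V : Finset α) (χ : Finset α → C), M ≤ #V →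
      ∃ A ⊆ V, #A = N ∧ ∃ f : α → C,
        ∀ x ⊆ A, ∀ hx : x.Nonempty, #x = r + 1 → χ x = f (x.min' hx) := by
  induction N with
  | zero =>
    refine ⟨0, fun V χ _ => ⟨∅, empty_subset _, card_empty, fun _ => χ ∅, ?_⟩⟩
    intro x hx hne
    simp [subset_empty.1 hx] at hne
  | succ N ihN =>
    obtain ⟨M₁, hM₁⟩ := ihN
    obtain ⟨M, hM⟩ := ih M₁
    refine ⟨M + 1, fun {α} _ V χ hV => ?_⟩
    have hVne : V.Nonempty := card_pos.1 (by omega)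
    set a := V.min' hVne
    have ha_lt : ∀ y ∈ V.erase a, a < y := fun y hy =>
      lt_of_le_of_ne (V.min'_le y (mem_of_mem_erase hy)) (ne_of_mem_erase hy).symm
    obtain ⟨H, hHV, hHcard, c, hc⟩ :=
      hM (V.erase a) (fun z => χ (insert a z)) (by rw [card_erase_of_mem (V.min'_mem hVne)]; omega)
    obtain ⟨A, hAH, hAcard, f, hf⟩ := hM₁ H χ hHcard.ge
    have haA : a ∉ A := fun h => (ha_lt a (hHV (hAH h))).false
    refine ⟨insert a A, insert_subset (V.min'_mem hVne) ((hAH.trans hHV).trans (erase_subset _ _)),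
      by rw [card_insert_of_notMem haA, hAcard], Function.update f a c, ?_⟩
    intro x hx hne hxcard
    by_cases hax : a ∈ x
    · have hmin : x.min' hne = a := le_antisymm (x.min'_le a hax) (x.le_min' hne a fun y hy => by
        rcases mem_insert.1 (hx hy) with rfl | hy
        · exact le_rfl
        · exact (ha_lt y (hHV (hAH hy))).le)
      rw [hmin, Function.update_self, ← insert_erase hax]
      refine hc _ (fun y hy => ?_) (by rw [card_erase_of_mem hax, hxcard]; rfl)
      rcases mem_insert.1 (hx (mem_of_mem_erase hy)) with rfl | hy'
      · exact absurd rfl (ne_of_mem_erase hy)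
      · exact hAH hy'
    · have hxA : x ⊆ A := fun y hy =>
        (mem_insert.1 (hx hy)).resolve_left (by rintro rfl; exact hax hy)
      have hmin : x.min' hne ≠ a := fun h => hax (h ▸ x.min'_mem hne)
      rw [Function.update_of_ne hmin, hf x hxA hne hxcard]

theorem exists_homogeneous_subset [Fintype C] (r L : ℕ) :
    ∃ M, ∀ {α : Type} [LinearOrder α] (V : Finset α) (χ : Finset α → C), M ≤ #V →
      ∃ H ⊆ V, #H = L ∧ ∃ c, ∀ x ⊆ H, #x = r → χ x = c := by
  classical
  induction r generalizing L with
  | zero =>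
    refine ⟨L, fun V χ hV => ?_⟩
    obtain ⟨H, hHV, hH⟩ := exists_subset_card_eq hV
    exact ⟨H, hHV, hH, χ ∅, fun x _ hx => by rw [card_eq_zero.1 hx]⟩
  | succ r ih =>
    obtain ⟨M, hM⟩ := exists_minHomogeneous_subset r ih (Fintype.card C * L)
    refine ⟨M, fun V χ hV => ?_⟩
    obtain ⟨A, hAV, hAcard, f, hf⟩ := hM V χ hV
    obtain ⟨c, -, hc⟩ := exists_le_card_fiber_of_mul_le_card_of_maps_to
      (fun a _ => mem_univ (f a)) ⟨χ ∅, mem_univ _⟩ (by rw [card_univ, hAcard])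
    obtain ⟨H, hHA, hHcard⟩ := exists_subset_card_eq hc
    refine ⟨H, (hHA.trans (filter_subset _ _)).trans hAV, hHcard, c, fun x hx hxcard => ?_⟩
    have hne : x.Nonempty := card_pos.1 (by omega)
    rw [hf x (hx.trans (hHA.trans (filter_subset _ _))) hne hxcard]
    exact (mem_filter.1 (hHA (hx (x.min'_mem hne)))).2

end Ramsey

section Canonical

variable {α : Type*} {n : ℕ}

def DiffersOnlyAt (p q : Fin n → α) (i : Fin n) : Prop :=
  p i ≠ q i ∧ ∀ j ≠ i, p j = q j

theorem DiffersOnlyAt.symm {p q : Fin n → α} {i : Fin n} (h : DiffersOnlyAt p q i) :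
    DiffersOnlyAt q p i :=
  ⟨h.1.symm, fun j hj => (h.2 j hj).symm⟩

variable [LinearOrder α]

def OrderInvariant (R : (Fin n → α) → (Fin n → α) → Prop) : Prop :=
  ∀ k ≤ 2 * n, ∀ Φ Ψ : Fin k → α, StrictMono Φ → StrictMono Ψ →
    ∀ a b : Fin n → Fin k, R (Φ ∘ a) (Φ ∘ b) ↔ R (Ψ ∘ a) (Ψ ∘ b)

theorem exists_strictMono_insertNth_of_differsOnlyAt {p q : Fin n → α} {i : Fin n}
    (hp : StrictMono p) (hq : StrictMono q) (h : DiffersOnlyAt p q i) (hlt : p i < q i) :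
    ∃ Φ : Fin (n + 1) → α, StrictMono Φ ∧ p = Φ ∘ i.succ.succAbove ∧
      q = Φ ∘ i.castSucc.succAbove := by
  refine ⟨i.succ.insertNth (q i) p, ?_, ?_, ?_⟩
  · refine (Fin.strictMono_insertNth_iff _ _ _).2 ⟨hp, fun j hj => ?_, fun j hj => ?_⟩
    · exact (hp.monotone (Fin.castSucc_lt_succ_iff.1 hj)).trans_lt hlt
    · have hij : i < j := Fin.succ_le_castSucc_iff.1 hj
      rw [h.2 j hij.ne']
      exact hq hij
  · funext j
    simp
  · funext j
    rcases eq_or_ne j i with rfl | hj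
    · simp
    have hsucc : i.castSucc.succAbove j = i.succ.succAbove j := by
      rcases hj.lt_or_gt with hj | hj
      · rw [Fin.succAbove_castSucc_of_lt _ _ hj, Fin.succAbove_succ_of_le _ _ hj.le]
      · rw [Fin.succAbove_castSucc_of_le _ _ hj.le, Fin.succAbove_succ_of_lt _ _ hj]
    simp [hsucc, h.2 j hj]

theorem OrderInvariant.iff_of_differsOnlyAt {R : (Fin n → α) → (Fin n → α) → Prop}
    (hinv : OrderInvariant R) (hsymm : ∀ {p q}, R p q → R q p)
    {p q p' q' : Fin n → α} {i : Fin n} (hp : StrictMono p) (hq : StrictMono q)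
    (hp' : StrictMono p') (hq' : StrictMono q')
    (h : DiffersOnlyAt p q i) (h' : DiffersOnlyAt p' q' i) : R p q ↔ R p' q' := by
  have hcomm : ∀ {p q}, R p q ↔ R q p := ⟨hsymm, hsymm⟩
  wlog hlt : p i < q i generalizing p q
  · rw [hcomm]
    exact this hq hp h.symm (lt_of_le_of_ne (not_lt.1 hlt) h.1.symm)
  wlog hlt' : p' i < q' i generalizing p' q'
  · rw [hcomm (p := p')]
    exact this hq' hp' h'.symm (lt_of_le_of_ne (not_lt.1 hlt') h'.1.symm)
  obtain ⟨Φ, hΦ, rfl, rfl⟩ := exists_strictMono_insertNth_of_differsOnlyAt hp hq h hlt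
  obtain ⟨Ψ, hΨ, rfl, rfl⟩ := exists_strictMono_insertNth_of_differsOnlyAt hp' hq' h' hlt'
  exact hinv (n + 1) (by have := i.pos; omega) Φ Ψ hΦ hΨ _ _

theorem exists_strictMono_factorization {p q : Fin n → α} (hp : StrictMono p)
    (hq : StrictMono q) :
    ∃ k ≤ 2 * n, ∃ U : Fin k → α, StrictMono U ∧ ∃ a b : Fin n → Fin k,
      StrictMono a ∧ StrictMono b ∧ p = U ∘ a ∧ q = U ∘ b := by
  set S := univ.image p ∪ univ.image q
  have hk : #S ≤ 2 * n := (card_union_le _ _).trans (by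
    simpa [two_mul] using add_le_add (card_image_le (s := univ) (f := p))
      (card_image_le (s := univ) (f := q)))
  set e := S.orderIsoOfFin rfl
  have hU : ∀ x : S, S.orderEmbOfFin rfl (e.symm x) = x := fun x => by
    rw [← coe_orderIsoOfFin_apply, OrderIso.apply_symm_apply]
  refine ⟨#S, hk, S.orderEmbOfFin rfl, (S.orderEmbOfFin rfl).strictMono,
    fun j => e.symm ⟨p j, by simp [S]⟩, fun j => e.symm ⟨q j, by simp [S]⟩,
    fun _ _ h => e.symm.strictMono (hp h), fun _ _ h => e.symm.strictMono (hq h),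
    funext fun j => (hU ⟨p j, _⟩).symm, funext fun j => (hU ⟨q j, _⟩).symm⟩

theorem notMem_range_of_lt_of_eq_of_gt {p q : Fin n → α} (hp : StrictMono p)
    (hq : StrictMono q) {i : Fin n} (hlt : p i < q i) (hgt : ∀ j, i < j → p j = q j) :
    q i ∉ Set.range p := by
  rintro ⟨j, hj⟩
  have hij : i < j := hp.lt_iff_lt.1 (hj ▸ hlt)
  exact hij.ne' (hq.injective ((hgt j hij).symm.trans hj))

theorem strictMono_update_of_lt_of_eq_of_gt {p q : Fin n → α} (hp : StrictMono p)
    (hq : StrictMono q) {i : Fin n} (hlt : p i < q i) (hgt : ∀ j, i < j → p j = q j) :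
    StrictMono (Function.update p i (q i)) := by
  intro a b hab
  rcases eq_or_ne a i with rfl | ha
  · rw [Function.update_self, Function.update_of_ne hab.ne', hgt b hab]
    exact hq hab
  rcases eq_or_ne b i with rfl | hb
  · rw [Function.update_self, Function.update_of_ne ha]
    exact (hp hab).trans hlt
  · rw [Function.update_of_ne ha, Function.update_of_ne hb]
    exact hp hab

def essentialIndices (R : (Fin n → α) → (Fin n → α) → Prop) : Set (Fin n) :=
  {i | ∃ u v, StrictMono u ∧ StrictMono v ∧ DiffersOnlyAt u v i ∧ ¬ R u v}

namespace OrderInvariant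

variable {l : ℕ} {R : (Fin n → Fin l) → (Fin n → Fin l) → Prop}

theorem iff_notMem_essentialIndices (hinv : OrderInvariant R)
    (hsymm : ∀ {p q}, R p q → R q p) {u v : Fin n → Fin l} {i : Fin n} (hu : StrictMono u)
    (hv : StrictMono v) (h : DiffersOnlyAt u v i) : R u v ↔ i ∉ essentialIndices R := by
  refine ⟨fun hR ⟨u', v', hu', hv', h', hR'⟩ => ?_, fun hi => by_contra fun hR => ?_⟩
  · exact hR' ((hinv.iff_of_differsOnlyAt hsymm hu hv hu' hv' h h').1 hR)
  · exact hi ⟨u, v, hu, hv, h, hR⟩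

theorem notMem_essentialIndices_of_notMem_range (hl : 4 * n ≤ l) (hinv : OrderInvariant R)
    (hsymm : ∀ {p q}, R p q → R q p) (htrans : ∀ {p q r}, R p q → R q r → R p r)
    {p q : Fin n → Fin l} (hp : StrictMono p) (hq : StrictMono q) (hR : R p q) {i : Fin n}
    (hi : q i ∉ Set.range p) : i ∉ essentialIndices R := by
  obtain ⟨k, hk, U, hU, a, b, -, hb, rfl, rfl⟩ := exists_strictMono_factorization hp hq
  have hab : ∀ j, a j ≠ b i := fun j h => hi ⟨j, by simp [h]⟩
  -- `Φ true` moves the point `b i` of the doubled pattern by one, unseen by `a` as `b i ∉ range a`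
  let Φ : Bool → Fin k → Fin l := fun ε ρ =>
    ⟨2 * ρ + if ε ∧ ρ = b i then 1 else 0, by have := ρ.isLt; split_ifs <;> omega⟩
  have hΦ : ∀ ε, StrictMono (Φ ε) := fun ε x y hxy => by
    simp only [Φ, Fin.mk_lt_mk]
    have : (x : ℕ) < y := hxy
    split_ifs <;> omega
  have ha : Φ true ∘ a = Φ false ∘ a := funext fun j => by simp [Φ, hab j]
  have h₁ : R (Φ false ∘ a) (Φ false ∘ b) := (hinv k hk U _ hU (hΦ false) a b).1 hR
  have h₂ : R (Φ false ∘ a) (Φ true ∘ b) := ha ▸ (hinv k hk U _ hU (hΦ true) a b).1 hR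
  exact (hinv.iff_notMem_essentialIndices hsymm ((hΦ false).comp hb) ((hΦ true).comp hb)
    ⟨by simp [Φ], fun j hj => by simp [Φ, hb.injective.ne hj]⟩).1 (htrans (hsymm h₁) h₂)

theorem iff_forall_mem_essentialIndices_of_eq_of_gt (hl : 4 * n ≤ l) (hinv : OrderInvariant R)
    (hsymm : ∀ {p q}, R p q → R q p) (htrans : ∀ {p q r}, R p q → R q r → R p r) {i : Fin n}
    (ih : ∀ p q : Fin n → Fin l, StrictMono p → StrictMono q → (∀ j, i ≤ j → p j = q j) →
      (R p q ↔ ∀ j ∈ essentialIndices R, p j = q j))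
    {p q : Fin n → Fin l} (hp : StrictMono p) (hq : StrictMono q)
    (hgt : ∀ j, i < j → p j = q j) : R p q ↔ ∀ j ∈ essentialIndices R, p j = q j := by
  rcases eq_or_ne (p i) (q i) with heq | hne
  · exact ih p q hp hq fun j hj => hj.eq_or_lt.elim (fun h => h ▸ heq) (hgt j)
  wlog hlt : p i < q i generalizing p q
  · rw [show R p q ↔ R q p from ⟨hsymm, hsymm⟩, forall₂_congr fun j _ => eq_comm]
    exact this hq hp (fun j hj => (hgt j hj).symm) hne.symm (hne.symm.lt_of_le (not_lt.1 hlt))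
  by_cases hi : i ∈ essentialIndices R
  · refine iff_of_false (fun hR => ?_) fun h => hne (h i hi)
    exact hinv.notMem_essentialIndices_of_notMem_range hl hsymm htrans hp hq hR
      (notMem_range_of_lt_of_eq_of_gt hp hq hlt hgt) hi
  set p' := Function.update p i (q i)
  have hp' : StrictMono p' := strictMono_update_of_lt_of_eq_of_gt hp hq hlt hgt
  have hpp' : R p p' := (hinv.iff_notMem_essentialIndices hsymm hp hp'
    ⟨by simpa [p'] using hne, fun j hj => (Function.update_of_ne hj _ _).symm⟩).2 hi
  have hp'q : ∀ j, i ≤ j → p' j = q j := fun j hj => by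
    rcases hj.eq_or_lt with rfl | hj
    · simp [p']
    · exact (Function.update_of_ne hj.ne' _ _).trans (hgt j hj)
  rw [show R p q ↔ R p' q from ⟨fun h => htrans (hsymm hpp') h, htrans hpp'⟩,
    ih p' q hp' hq hp'q]
  exact forall₂_congr fun j hj => by
    rw [show p' j = p j from Function.update_of_ne (ne_of_mem_of_not_mem hj hi) _ _]

theorem iff_forall_mem_essentialIndices (hl : 4 * n ≤ l) (hinv : OrderInvariant R)
    (hrefl : ∀ p, StrictMono p → R p p) (hsymm : ∀ {p q}, R p q → R q p)
    (htrans : ∀ {p q r}, R p q → R q r → R p r) {p q : Fin n → Fin l} (hp : StrictMono p)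
    (hq : StrictMono q) : R p q ↔ ∀ i ∈ essentialIndices R, p i = q i := by
  suffices h : ∀ k : ℕ, ∀ p q : Fin n → Fin l, StrictMono p → StrictMono q →
      (∀ j : Fin n, k ≤ (j : ℕ) → p j = q j) → (R p q ↔ ∀ i ∈ essentialIndices R, p i = q i) from
    h n p q hp hq fun j hj => absurd j.isLt (by omega)
  intro k
  induction k with
  | zero =>
    intro p q hp _ h
    obtain rfl : p = q := funext fun j => h j (Nat.zero_le _)
    simpa using hrefl p hp
  | succ k ih =>
    intro p q hp hq h
    by_cases hk : k < n
    · exact hinv.iff_forall_mem_essentialIndices_of_eq_of_gt (i := ⟨k, hk⟩) hl hsymm htrans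
        (fun p q hp hq h => ih p q hp hq fun j hj => h j hj) hp hq fun j hj => h j hj
    · exact ih p q hp hq fun j hj => absurd j.isLt (by omega)

end OrderInvariant

end Canonical

section Transfer

variable {α : Type*} {n : ℕ}

def tupleRel [DecidableEq α] (E : {t : Finset α // #t = n} → {t : Finset α // #t = n} → Prop)
    (f g : Fin n → α) : Prop :=
  ∃ (hf : #(univ.image f) = n) (hg : #(univ.image g) = n), E ⟨_, hf⟩ ⟨_, hg⟩

def patternColoring [LinearOrder α]
    (E : {t : Finset α // #t = n} → {t : Finset α // #t = n} → Prop)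
    (X : Finset α) (a b : Fin n → Fin (2 * n)) : Prop :=
  ∃ h : #X = 2 * n, tupleRel E (X.orderEmbOfFin h ∘ a) (X.orderEmbOfFin h ∘ b)

variable {E : {t : Finset α // #t = n} → {t : Finset α // #t = n} → Prop}

namespace tupleRel

variable [DecidableEq α]

theorem refl (hE : Equivalence E) {f : Fin n → α} (hf : Function.Injective f) :
    tupleRel E f f := by
  have h : #(univ.image f) = n := by
    rw [card_image_of_injective _ hf, card_fin]
  exact ⟨h, h, hE.refl _⟩

theorem symm (hE : Equivalence E) {f g : Fin n → α} : tupleRel E f g → tupleRel E g f :=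
  fun ⟨hf, hg, h⟩ => ⟨hg, hf, hE.symm h⟩

theorem trans (hE : Equivalence E) {f g h : Fin n → α} :
    tupleRel E f g → tupleRel E g h → tupleRel E f h :=
  fun ⟨hf, _, h₁⟩ ⟨_, hh, h₂⟩ => ⟨hf, hh, hE.trans h₁ h₂⟩

end tupleRel

variable [LinearOrder α]

theorem tupleRel_orderEmbOfFin_iff (b c : {t : Finset α // #t = n}) :
    tupleRel E (b.1.orderEmbOfFin b.2) (c.1.orderEmbOfFin c.2) ↔ E b c := by
  simp only [tupleRel, image_orderEmbOfFin_univ]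
  exact ⟨fun ⟨_, _, h⟩ => h, fun h => ⟨b.2, c.2, h⟩⟩

theorem patternColoring_image_iff {Φ : Fin (2 * n) → α}
    (hΦ : StrictMono Φ) (a b : Fin n → Fin (2 * n)) :
    patternColoring E (univ.image Φ) a b ↔ tupleRel E (Φ ∘ a) (Φ ∘ b) := by
  have hcard : #(univ.image Φ) = 2 * n := by
    rw [card_image_of_injective _ hΦ.injective, card_fin]
  have hΦ' : ⇑((univ.image Φ).orderEmbOfFin hcard) = Φ :=
    (orderEmbOfFin_unique hcard (fun j => mem_image_of_mem _ (mem_univ j)) hΦ).symm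
  constructor
  · rintro ⟨h, hR⟩
    rwa [hΦ'] at hR
  · intro hR
    exact ⟨hcard, by rwa [hΦ']⟩

theorem exists_strictMono_extend {k N l : ℕ} (hk : k ≤ N) {Φ : Fin k → Fin l}
    (hΦ : StrictMono Φ) : ∃ Φ' : Fin N → Fin (l + N), StrictMono Φ' ∧
      ∀ j, Φ' (Fin.castLE hk j) = Fin.castLE (Nat.le_add_right l N) (Φ j) := by
  refine ⟨fun t => if h : (t : ℕ) < k then Fin.castLE (Nat.le_add_right l N) (Φ ⟨t, h⟩)
    else ⟨l + t, by omega⟩, fun x y hxy => ?_, fun j => by simp⟩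
  have hxy' : (x : ℕ) < y := hxy
  by_cases hy : (y : ℕ) < k
  · have hx : (x : ℕ) < k := hxy'.trans hy
    simpa [hx, hy] using hΦ (show (⟨x, hx⟩ : Fin k) < ⟨y, hy⟩ from hxy)
  · by_cases hx : (x : ℕ) < k
    · simp only [hx, hy, dite_true, dite_false, Fin.lt_def, Fin.val_castLE]
      omega
    · simp only [hx, hy, dite_false, Fin.mk_lt_mk]
      omega

theorem exists_orderInvariant_of_homogeneous {l : ℕ} {H : Finset α} (hH : #H = l + 2 * n)
    {c : (Fin n → Fin (2 * n)) → (Fin n → Fin (2 * n)) → Prop}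
    (hc : ∀ X ⊆ H, #X = 2 * n → patternColoring E X = c) :
    ∃ e : Fin l → α, StrictMono e ∧ OrderInvariant fun p q => tupleRel E (e ∘ p) (e ∘ q) := by
  set eH := H.orderEmbOfFin hH
  set e : Fin l → α := fun j => eH (Fin.castLE (Nat.le_add_right _ _) j)
  refine ⟨e, eH.strictMono.comp (Fin.strictMono_castLE _), fun k hk Φ Ψ hΦ hΨ a b => ?_⟩
  have key : ∀ Φ : Fin k → Fin l, StrictMono Φ →
      (tupleRel E (e ∘ Φ ∘ a) (e ∘ Φ ∘ b) ↔ c (Fin.castLE hk ∘ a) (Fin.castLE hk ∘ b)) := by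
    intro Φ hΦ
    obtain ⟨Φ', hΦ', hΦ'Φ⟩ := exists_strictMono_extend hk hΦ
    have hsub : univ.image (eH ∘ Φ') ⊆ H := fun x hx => by
      obtain ⟨j, -, rfl⟩ := mem_image.1 hx
      exact H.orderEmbOfFin_mem hH _
    have hcard : #(univ.image (eH ∘ Φ')) = 2 * n := by
      rw [card_image_of_injective _ (eH.strictMono.comp hΦ').injective, card_fin]
    rw [← hc _ hsub hcard, patternColoring_image_iff (eH.strictMono.comp hΦ')]
    simp [e, Function.comp_def, hΦ'Φ]
  exact (key Φ hΦ).trans (key Ψ hΨ).symm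

theorem exists_strictMono_comp_eq_orderEmbOfFin {l : ℕ} {e : Fin l → α} (he : StrictMono e)
    {b : Finset α} (hb : #b = n) (hbe : ∀ x ∈ b, ∃ y, e y = x) :
    ∃ p : Fin n → Fin l, StrictMono p ∧ e ∘ p = b.orderEmbOfFin hb := by
  choose p hp using fun j => hbe _ (b.orderEmbOfFin_mem hb j)
  refine ⟨p, fun x y hxy => he.lt_iff_lt.1 ?_, funext hp⟩
  rw [hp, hp]
  exact (b.orderEmbOfFin hb).strictMono hxy

end Transfer

theorem stmt_12_general (n l : ℕ) :
    ∃ m : ℕ, l < m ∧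
      ∀ E : {t : Finset (Fin m) // t.card = n} → {t : Finset (Fin m) // t.card = n} → Prop,
        Equivalence E →
        ∃ s : Finset (Fin m), s.card = l ∧
          ∃ I : Set (Fin n),
            ∀ b c : {t : Finset (Fin m) // t.card = n},
              b.1 ⊆ s → c.1 ⊆ s →
              (E b c ↔ ∀ i ∈ I, b.1.orderEmbOfFin b.2 i = c.1.orderEmbOfFin c.2 i) := by
  classical
  obtain ⟨M, hM⟩ := exists_homogeneous_subset
    (C := (Fin n → Fin (2 * n)) → (Fin n → Fin (2 * n)) → Prop) (2 * n) (l + 4 * n + 2 * n)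
  refine ⟨M + l + 1, by omega, fun E hE => ?_⟩
  obtain ⟨H, -, hH, P, hP⟩ :=
    hM univ (patternColoring E) (by rw [card_fin]; omega)
  obtain ⟨e, he, hinv⟩ := exists_orderInvariant_of_homogeneous hH hP
  have hl : l ≤ l + 4 * n := Nat.le_add_right _ _
  set s := univ.image (e ∘ Fin.castLE hl)
  have hs : ∀ x ∈ s, ∃ y, e y = x := fun x hx => by
    obtain ⟨y, -, rfl⟩ := mem_image.1 hx
    exact ⟨_, rfl⟩
  refine ⟨s, ?_, essentialIndices fun p q => tupleRel E (e ∘ p) (e ∘ q), fun b c hb hc => ?_⟩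
  · rw [card_image_of_injective _ (he.comp (Fin.strictMono_castLE hl)).injective, card_fin]
  obtain ⟨p, hp, hpb⟩ := exists_strictMono_comp_eq_orderEmbOfFin he b.2 fun x hx => hs x (hb hx)
  obtain ⟨q, hq, hqc⟩ := exists_strictMono_comp_eq_orderEmbOfFin he c.2 fun x hx => hs x (hc hx)
  rw [← tupleRel_orderEmbOfFin_iff (E := E), ← hpb, ← hqc,
    hinv.iff_forall_mem_essentialIndices (by omega)
    (fun p hp => tupleRel.refl hE (he.comp hp).injective) (tupleRel.symm hE) (tupleRel.trans hE)
    hp hq]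
  simp [he.injective.eq_iff]

/-- Finite Erdős–Rado canonization theorem: for all `n ≤ l` there is `m > l`
such that every equivalence relation `E` on the `n`-element subsets of `{0,…,m-1}` is
canonical when restricted to the `n`-element subsets of some `l`-element set `s`: there is
`I ⊆ n` with `E = E_I` on `[s]^n`. -/
theorem stmt_12 (n l : ℕ) (hnl : n ≤ l) :
    ∃ m : ℕ, l < m ∧
      ∀ E : {t : Finset (Fin m) // t.card = n} → {t : Finset (Fin m) // t.card = n} → Prop,
        Equivalence E →
        ∃ s : Finset (Fin m), s.card = l ∧
          ∃ I : Set (Fin n),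
            ∀ b c : {t : Finset (Fin m) // t.card = n},
              b.1 ⊆ s → c.1 ⊆ s →
              (E b c ↔ ∀ i ∈ I, b.1.orderEmbOfFin b.2 i = c.1.orderEmbOfFin c.2 i) :=
  stmt_12_general n l
end

section
/- Finite product Ramsey theorem for sets: for every s < ω, all n_j ≤ m_j (j < s), and every k ≥ 2, there exist p_j (j < s) such that for every k-coloring of ∏_{j<s} [p_j]^{n_j} there are B_j ∈ [p_j]^{m_j} with ∏_{j<s} [B_j]^{n_j} monochromatic. -/
/-!
The infinite Ramsey theorem holds by induction on `n`: from an infinite set extract a strictly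
increasing sequence `a` such that the colour of `{a t} ∪ A` for `A ⊆ {a u | u > t}` depends only
on `t`, then pigeonhole on that colour. The finite version follows by compactness: if every `p`
had a bad colouring of `Fin p`, their limit along a nonprincipal ultrafilter would be a colouring
of `ℕ` with no infinite, hence no `m`-element, homogeneous set. The product version is by
induction on the number `s` of factors: colour the `n 0`-subsets of the first factor by the
colouring they induce on the remaining `s` factors, a finite set of colours.
-/

open Finset Filter

section Homogeneous

variable {α β : Type*}

def IsHomogeneous (c : Finset β → α) (n : ℕ) (T : Set β) (i : α) : Prop :=
  ∀ ⦃A : Finset β⦄, ↑A ⊆ T → #A = n → c A = i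

theorem exists_prehomogeneous_seq {n : ℕ}
    (ih : ∀ (c : Finset ℕ → α) {S : Set ℕ}, S.Infinite →
      ∃ T ⊆ S, T.Infinite ∧ ∃ i, IsHomogeneous c n T i)
    (c : Finset ℕ → α) {S : Set ℕ} (hS : S.Infinite) :
    ∃ (a : ℕ → ℕ) (col : ℕ → α), StrictMono a ∧ Set.range a ⊆ S ∧
      ∀ t, IsHomogeneous (fun A => c (insert (a t) A)) n (a '' Set.Ioi t) (col t) := by
  have step (X : {X : Set ℕ // X.Infinite}) : ∃ y : ℕ × {X : Set ℕ // X.Infinite} × α,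
      y.1 ∈ X.1 ∧ y.2.1.1 ⊆ X.1 ∩ Set.Ioi y.1 ∧
        IsHomogeneous (fun A => c (insert y.1 A)) n y.2.1 y.2.2 := by
    obtain ⟨x, hx⟩ := X.2.nonempty
    have hinf : (X.1 ∩ Set.Ioi x).Infinite := by
      simpa [Set.sdiff_eq, Set.compl_Iic] using X.2.sdiff (Set.finite_Iic x)
    obtain ⟨T, hT, hTinf, i, hi⟩ := ih (fun A => c (insert x A)) hinf
    exact ⟨(x, ⟨T, hTinf⟩, i), hx, hT, hi⟩
  choose next hnext using step
  let X : ℕ → {X : Set ℕ // X.Infinite} := fun t => (fun X => (next X).2.1)^[t] ⟨S, hS⟩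
  have hX (t : ℕ) : X (t + 1) = (next (X t)).2.1 := Function.iterate_succ_apply' _ _ _
  let a t := (next (X t)).1
  have ha_mem (t : ℕ) : a t ∈ (X t).1 := (hnext (X t)).1
  have hX_succ (t : ℕ) : (X (t + 1)).1 ⊆ (X t).1 ∩ Set.Ioi (a t) := hX t ▸ (hnext (X t)).2.1
  have hX_anti : Antitone fun t => (X t).1 :=
    antitone_nat_of_succ_le fun t => (hX_succ t).trans Set.inter_subset_left
  refine ⟨a, fun t => (next (X t)).2.2,
    strictMono_nat_of_lt_succ fun t => (hX_succ t (ha_mem _)).2, ?_,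
    fun t A hA => (hnext (X t)).2.2 ?_⟩
  · rintro _ ⟨t, rfl⟩
    exact hX_anti (Nat.zero_le t) (ha_mem t)
  · rw [← hX]
    refine hA.trans ?_
    rintro _ ⟨u, hu, rfl⟩
    exact hX_anti (Nat.succ_le_of_lt hu) (ha_mem u)

theorem exists_infinite_homogeneous [Finite α] (n : ℕ) (c : Finset ℕ → α) {S : Set ℕ}
    (hS : S.Infinite) : ∃ T ⊆ S, T.Infinite ∧ ∃ i, IsHomogeneous c n T i := by
  induction n generalizing c S with
  | zero => exact ⟨S, subset_rfl, hS, c ∅, fun A _ hA => by rw [card_eq_zero.mp hA]⟩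
  | succ n ih =>
    obtain ⟨a, col, ha_mono, ha_range, ha_hom⟩ :=
      exists_prehomogeneous_seq (fun c _ => ih c) c hS
    obtain ⟨i, hi⟩ := Finite.exists_infinite_fiber col
    refine ⟨a '' (col ⁻¹' {i}), (Set.image_subset_range _ _).trans ha_range,
      (Set.infinite_coe_iff.mp hi).image ha_mono.injective.injOn, i, fun A hA hcard => ?_⟩
    have hne : A.Nonempty := card_pos.mp (by omega)
    obtain ⟨t, hti, hx⟩ := hA (A.min'_mem hne)
    have hrest : ↑(A.erase (a t)) ⊆ a '' Set.Ioi t := by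
      intro y hy
      obtain ⟨u, -, rfl⟩ := hA (mem_of_mem_erase hy)
      refine ⟨u, ha_mono.lt_iff_lt.mp ?_, rfl⟩
      exact hx ▸ A.min'_lt_of_mem_erase_min' hne (hx ▸ hy)
    have hmem : a t ∈ A := hx ▸ A.min'_mem hne
    rw [← insert_erase hmem, ← hti]
    exact ha_hom t hrest (by rw [card_erase_of_mem hmem, hcard]; rfl)

end Homogeneous

theorem exists_finite_homogeneous (α : Type*) [Finite α] (n m : ℕ) :
    ∃ p, ∀ c : Finset (Fin p) → α,
      ∃ B : Finset (Fin p), #B = m ∧ ∃ i, ∀ A ∈ B.powersetCard n, c A = i := by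
  by_contra! hbad
  choose c hc using hbad
  let U := hyperfilter ℕ
  have hU : (U : Filter ℕ) ≤ atTop := Nat.cofinite_eq_atTop ▸ hyperfilter_le_cofinite
  let c' (p : ℕ) (A : Finset ℕ) : α :=
    c p (A.preimage Fin.valEmbedding Fin.valEmbedding.injective.injOn)
  have hlim (A : Finset ℕ) : ∃ i, ∀ᶠ p in (U : Filter ℕ), c' p A = i :=
    Ultrafilter.eventually_exists_iff.mp (Eventually.of_forall fun _ => ⟨_, rfl⟩)
  choose climit hclimit using hlim
  obtain ⟨T, -, hT, i, hhom⟩ := exists_infinite_homogeneous n climit Set.infinite_univ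
  obtain ⟨B, hBT, hB⟩ := hT.exists_subset_card_eq m
  have hgood : ∀ᶠ p in (U : Filter ℕ),
      (∀ b ∈ B, b < p) ∧ ∀ A ∈ B.powerset, c' p A = climit A :=
    ((eventually_all_finset B).mpr fun b _ => hU (eventually_gt_atTop b)).and
      ((eventually_all_finset _).mpr fun A _ => hclimit A)
  obtain ⟨p, hBp, hcp⟩ := hgood.exists
  obtain ⟨B', -, rfl⟩ : ∃ B' ⊆ univ, B = B'.map Fin.valEmbedding :=
    subset_map_iff.mp (by simpa [subset_iff] using hBp)
  obtain ⟨A', hA', hne⟩ := hc p B' (by simpa using hB) i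
  rw [mem_powersetCard] at hA'
  refine hne ?_
  calc c p A' = c' p (A'.map Fin.valEmbedding) := by simp only [c', preimage_map]
    _ = climit (A'.map Fin.valEmbedding) := hcp _ (mem_powerset.mpr (map_subset_map.mpr hA'.1))
    _ = i := hhom ((coe_subset.mpr (map_subset_map.mpr hA'.1)).trans hBT) (by simpa using hA'.2)

theorem exists_pi_homogeneous (α : Type*) [Finite α] (s : ℕ) (n m : Fin s → ℕ) :
    ∃ p : Fin s → ℕ, ∀ c : (∀ j, Finset (Fin (p j))) → α,
      ∃ B : ∀ j, Finset (Fin (p j)), (∀ j, #(B j) = m j) ∧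
        ∃ i, ∀ A ∈ Fintype.piFinset fun j => (B j).powersetCard (n j), c A = i := by
  induction s with
  | zero =>
    exact ⟨finZeroElim, fun c => ⟨finZeroElim, finZeroElim, c finZeroElim,
      fun A _ => congrArg c (Subsingleton.elim _ _)⟩⟩
  | succ s ih =>
    obtain ⟨p, hp⟩ := ih (Fin.tail n) (Fin.tail m)
    obtain ⟨q, hq⟩ := exists_finite_homogeneous ((∀ j, Finset (Fin (p j))) → α) (n 0) (m 0)
    refine ⟨Fin.cons q p, fun c => ?_⟩
    obtain ⟨B₀, hB₀, c', hc'⟩ := hq fun A₀ A => c (Fin.cons A₀ A)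
    obtain ⟨B, hB, i, hi⟩ := hp c'
    refine ⟨Fin.cons B₀ B, Fin.cases hB₀ hB, i, fun A hA => ?_⟩
    rw [Fintype.mem_piFinset] at hA
    rw [← Fin.cons_self_tail A, ← hi (Fin.tail A) (Fintype.mem_piFinset.mpr fun j => hA j.succ)]
    exact congrFun (hc' (A 0) (hA 0)) (Fin.tail A)

theorem stmt_13_general (s : ℕ) (n m : Fin s → ℕ) (k : ℕ) :
    ∃ p : Fin s → ℕ,
      ∀ c : (∀ j : Fin s, Finset (Fin (p j))) → Fin k,
        ∃ B : ∀ j : Fin s, Finset (Fin (p j)),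
          (∀ j, (B j).card = m j) ∧
          ∃ i : Fin k,
            ∀ A : ∀ j : Fin s, Finset (Fin (p j)),
              (∀ j, (A j).card = n j ∧ A j ⊆ B j) → c A = i := by
  obtain ⟨p, hp⟩ := exists_pi_homogeneous (Fin k) s n m
  refine ⟨p, fun c => ?_⟩
  obtain ⟨B, hB, i, hi⟩ := hp c
  exact ⟨B, hB, i, fun A hA => hi A <|
    Fintype.mem_piFinset.mpr fun j => mem_powersetCard.mpr ⟨(hA j).2, (hA j).1⟩⟩

/-- Finite product Ramsey theorem for sets: for every `s < ω`, all
`n j ≤ m j` (`j < s`) and every `k ≥ 2`, there are `p j` (`j < s`) such that for every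
`k`-coloring of the products `∏_{j<s} [p j]^{n j}` there are `B j ∈ [p j]^{m j}` with
`∏_{j<s} [B j]^{n j}` monochromatic. -/
theorem stmt_13 (s : ℕ) (n m : Fin s → ℕ) (h : ∀ j, n j ≤ m j) (k : ℕ) (hk : 2 ≤ k) :
    ∃ p : Fin s → ℕ,
      ∀ c : (∀ j : Fin s, Finset (Fin (p j))) → Fin k,
        ∃ B : ∀ j : Fin s, Finset (Fin (p j)),
          (∀ j, (B j).card = m j) ∧
          ∃ i : Fin k,
            ∀ A : ∀ j : Fin s, Finset (Fin (p j)),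
              (∀ j, (A j).card = n j ∧ A j ⊆ B j) → c A = i :=
  stmt_13_general s n m k
end

section
/- If U is a rapid p-point ultrafilter on ω, then any ultrafilter obtained as the Fubini product U ⊗ U is Tukey equivalent to U. -/
/-!
The projection `B ↦ {n | Bₙ ∈ U}` witnesses `U ≤_T U ⊗ U`. Conversely, `X ↦ triangle X` is a
monotone map from `U` into `U ⊗ U` (rapidity makes `U` nonprincipal), and it is cofinal: given `A ∈ U ⊗ U`, the p-point property
gives one `Y ∈ U` contained in every fibre `Aₙ` above some bound `k n`, and rapidity gives `R ∈ U`
with at most `n` elements below `k n`, so that the triangle of `R ∩ Y ∩ {n | Aₙ ∈ U}` lies in `A`.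
-/

/-- Tukey reducibility: `V ≤_T U` iff there is a map `f` sending members of `U` to members of
`V` and sending every cofinal subset of `(U, ⊇)` to a cofinal subset of `(V, ⊇)`. -/
def TukeyLe {α β : Type} (V : Ultrafilter β) (U : Ultrafilter α) : Prop :=
  ∃ f : Set α → Set β,
    (∀ X ∈ U, f X ∈ V) ∧
    ∀ C : Set (Set α), C ⊆ {X | X ∈ U} → (∀ A ∈ U, ∃ B ∈ C, B ⊆ A) →
      ∀ A ∈ V, ∃ B ∈ C, f B ⊆ A

open Filter

theorem TukeyLe.of_monotone {α β : Type} {U : Ultrafilter α} {V : Ultrafilter β}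
    {f : Set α → Set β} (hf : Monotone f) (hmem : ∀ X ∈ U, f X ∈ V)
    (hcof : ∀ A ∈ V, ∃ X ∈ U, f X ⊆ A) : TukeyLe V U := by
  refine ⟨f, hmem, fun C _ hC A hA => ?_⟩
  obtain ⟨X, hXU, hXA⟩ := hcof A hA
  obtain ⟨B, hBC, hBX⟩ := hC X hXU
  exact ⟨B, hBC, (hf hBX).trans hXA⟩

theorem tukeyLe_fubini {α β : Type} {U : Ultrafilter α} {V : Ultrafilter β}
    {W : Ultrafilter (α × β)}
    (hW : ∀ A : Set (α × β), A ∈ W ↔ {a | {b | (a, b) ∈ A} ∈ V} ∈ U) : TukeyLe U W := by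
  refine TukeyLe.of_monotone (f := fun B => {a | {b | (a, b) ∈ B} ∈ V})
    (fun B B' h a ha => mem_of_superset ha fun b hb => h hb) (fun B hB => (hW B).1 hB)
    fun A hA => ⟨Prod.fst ⁻¹' A, (hW _).2 ?_, fun a ha => ?_⟩
  · exact mem_of_superset hA fun a ha =>
      Ultrafilter.mem_coe.1 (mem_of_superset univ_mem fun _ _ => ha)
  · by_contra h
    simp [h] at ha

theorem Set.ncard_inter_Iio_eq_count (s : Set ℕ) [DecidablePred (· ∈ s)] (n : ℕ) :
    (s ∩ Set.Iio n).ncard = Nat.count (· ∈ s) n := by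
  rw [Nat.count_eq_card_filter_range, ← Set.ncard_coe_finset]
  congr 1
  ext m
  simp [and_comm]

theorem Set.finite_setOf_ncard_inter_Iio_le (s : Set ℕ) (n : ℕ) :
    {m | m ∈ s ∧ (s ∩ Set.Iio m).ncard ≤ n}.Finite := by
  classical
  simp only [Set.ncard_inter_Iio_eq_count]
  exact (Set.finite_Iic n).of_injOn (fun _ hm => hm.2)
    fun _ ha _ hb h => Nat.count_injective ha.1 hb.1 h

theorem Ultrafilter.le_cofinite_of_rapid {U : Ultrafilter ℕ}
    (hrapid : ∀ f : ℕ → ℕ, ∃ X ∈ U, ∀ n, (X ∩ Set.Iio (f n)).ncard ≤ n) :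
    (U : Filter ℕ) ≤ cofinite := by
  intro s hs
  obtain ⟨N, hN⟩ := (mem_cofinite.1 hs).bddAbove
  obtain ⟨X, hXU, hX⟩ := hrapid fun _ => N + 1
  have hXN : X ∩ Set.Iio (N + 1) = ∅ :=
    (Set.ncard_eq_zero ((Set.finite_Iio _).inter_of_right X)).1 (Nat.le_zero.1 (hX 0))
  refine mem_of_superset hXU fun m hm => by_contra fun hms => ?_
  exact hXN.subset ⟨hm, Nat.lt_succ_of_le (hN hms)⟩

theorem Ultrafilter.exists_mem_eventually_mem_of_pPoint {U : Ultrafilter ℕ}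
    (hpp : ∀ X : ℕ → Set ℕ, (∀ n, X n ∈ U) → ∃ Y ∈ U, ∀ n, (Y \ X n).Finite)
    {X : ℕ → Set ℕ} (hX : ∀ n, X n ∈ U) :
    ∃ Y ∈ U, ∃ k : ℕ → ℕ, ∀ n, ∀ m ∈ Y, k n ≤ m → m ∈ X n := by
  obtain ⟨Y, hY, hfin⟩ := hpp X hX
  choose b hb using fun n => (hfin n).bddAbove
  refine ⟨Y, hY, fun n => b n + 1, fun n m hm hkm => ?_⟩
  by_contra h
  exact (Nat.lt_succ_of_le (hb n ⟨hm, h⟩)).not_ge hkm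

/-- For `n ∈ X`, the fibre of `triangle X` over `n` is `X` without its first `n + 1` elements. -/
def triangle (X : Set ℕ) : Set (ℕ × ℕ) :=
  {p | p.1 ∈ X ∧ p.2 ∈ X ∧ p.1 < (X ∩ Set.Iio p.2).ncard}

theorem triangle_mono : Monotone triangle := fun _ _ h _ ⟨h₁, h₂, h₃⟩ =>
  ⟨h h₁, h h₂, h₃.trans_le <|
    Set.ncard_le_ncard (Set.inter_subset_inter_left _ h) ((Set.finite_Iio _).inter_of_right _)⟩

section Fubini

variable {U : Ultrafilter ℕ} {W : Ultrafilter (ℕ × ℕ)}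
  (hW : ∀ A : Set (ℕ × ℕ), A ∈ W ↔ {n | {m | (n, m) ∈ A} ∈ U} ∈ U)
include hW

theorem triangle_mem (hU : (U : Filter ℕ) ≤ cofinite) {X : Set ℕ} (hX : X ∈ U) :
    triangle X ∈ W := by
  rw [hW]
  filter_upwards [hX] with n hn
  filter_upwards [hX, hU (Set.finite_setOf_ncard_inter_Iio_le X n).compl_mem_cofinite]
    with m hm hm'
  exact ⟨hn, hm, not_le.1 fun h => hm' ⟨hm, h⟩⟩

theorem exists_triangle_subset
    (hrapid : ∀ f : ℕ → ℕ, ∃ X ∈ U, ∀ n, (X ∩ Set.Iio (f n)).ncard ≤ n)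
    (hpp : ∀ X : ℕ → Set ℕ, (∀ n, X n ∈ U) → ∃ Y ∈ U, ∀ n, (Y \ X n).Finite)
    {A : Set (ℕ × ℕ)} (hA : A ∈ W) : ∃ X ∈ U, triangle X ⊆ A := by
  set S := {n | {m | (n, m) ∈ A} ∈ U}
  obtain ⟨Y, hY, k, hk⟩ := Ultrafilter.exists_mem_eventually_mem_of_pPoint hpp
    (X := fun n => {m | n ∈ S → (n, m) ∈ A}) fun n => by
      by_cases hn : n ∈ S
      · exact mem_of_superset hn fun m hm _ => hm
      · exact mem_of_superset univ_mem fun m _ hn' => absurd hn' hn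
  obtain ⟨R, hR, hRk⟩ := hrapid k
  refine ⟨R ∩ (Y ∩ S), inter_mem hR (inter_mem hY ((hW A).1 hA)), ?_⟩
  rintro ⟨n, m⟩ ⟨⟨-, -, hnS⟩, ⟨-, hmY, -⟩, hnm⟩
  have hkm : k n ≤ m := by
    by_contra! hmk
    have : n < n := calc
      n < _ := hnm
      _ ≤ (R ∩ Set.Iio (k n)).ncard :=
        Set.ncard_le_ncard
          (Set.inter_subset_inter Set.inter_subset_left (Set.Iio_subset_Iio hmk.le))
          ((Set.finite_Iio _).inter_of_right _)
      _ ≤ n := hRk n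
    exact lt_irrefl n this
  exact hk n m hmY hkm hnS

end Fubini

theorem stmt_17_general (U : Ultrafilter ℕ)
    (hrapid : ∀ f : ℕ → ℕ, ∃ X ∈ U, ∀ n, (X ∩ Set.Iio (f n)).ncard ≤ n)
    (hpp : ∀ X : ℕ → Set ℕ, (∀ n, X n ∈ U) → ∃ Y ∈ U, ∀ n, (Y \ X n).Finite)
    (W : Ultrafilter (ℕ × ℕ))
    (hW : ∀ A : Set (ℕ × ℕ), A ∈ W ↔ {n : ℕ | {m : ℕ | (n, m) ∈ A} ∈ U} ∈ U) :
    TukeyLe W U ∧ TukeyLe U W :=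
  ⟨TukeyLe.of_monotone triangle_mono
      (fun _ => triangle_mem hW (Ultrafilter.le_cofinite_of_rapid hrapid))
      fun _ => exists_triangle_subset hW hrapid hpp,
    tukeyLe_fubini hW⟩

/-- If `U` is a rapid p-point ultrafilter on ω, then the Fubini product
`U ⊗ U` is Tukey equivalent to `U`. -/
theorem stmt_17 (U : Ultrafilter ℕ)
    (hnp : ∀ A : Set ℕ, A.Finite → A ∉ U)
    (hrapid : ∀ f : ℕ → ℕ, ∃ X ∈ U, ∀ n, (X ∩ Set.Iio (f n)).ncard ≤ n)
    (hpp : ∀ X : ℕ → Set ℕ, (∀ n, X n ∈ U) → ∃ Y ∈ U, ∀ n, (Y \ X n).Finite)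
    (W : Ultrafilter (ℕ × ℕ))
    (hW : ∀ A : Set (ℕ × ℕ), A ∈ W ↔ {n : ℕ | {m : ℕ | (n, m) ∈ A} ∈ U} ∈ U) :
    TukeyLe W U ∧ TukeyLe U W :=
  stmt_17_general U hrapid hpp W hW
end

section
/- Let F be a Nash-Williams family of finite subsets of ω (no member is an initial segment of another, under increasing enumeration) that is a front on an infinite set A (every infinite subset of A has an initial segment in F). Then for every partition F = F_0 ∪ F_1 there is an infinite B ⊆ A such that all members of F that are subsets of B lie in a single piece F_i. -/
/-- `s` is an initial segment of the finite set `t` (under increasing enumerations). -/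
def FinInitSeg (s t : Finset ℕ) : Prop :=
  s ⊆ t ∧ ∀ a ∈ s, ∀ b ∈ t, b ∉ s → a < b

/-- `s` is an initial segment of the infinite set `X`. -/
def SetInitSeg (s : Finset ℕ) (X : Set ℕ) : Prop :=
  ↑s ⊆ X ∧ ∀ a ∈ s, ∀ b ∈ X, b ∉ s → a < b

/-!
Galvin–Prikry combinatorial forcing. Say that `X` accepts `s` if every `t ∈ F` extending `s`
by elements of `X` lies in `F₀`, and rejects `s` if no infinite `Y ⊆ X` accepts it. By fusion
there is an infinite `B ⊆ A` which accepts or rejects each of its finite subsets. If `B` accepts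
`∅` it is homogeneous for `F₀`. Otherwise, for every rejected `s ∉ F`, `B` rejects `s ∪ {n}` for
all but finitely many `n ∈ B`: the `n` for which this fails would form an infinite set accepting `s`.
A second diagonalisation then yields an infinite `C ⊆ B` such that `B` rejects every finite subset
of `C` with no proper initial segment in `F`; by thinness these include all members of `F` inside `C`, and a
rejected member of `F` is not in `F₀`.
-/

open Filter Finset

def IsThin (F : Set (Finset ℕ)) : Prop :=
  ∀ s ∈ F, ∀ t ∈ F, s ≠ t → ¬ FinInitSeg s t

namespace FinInitSeg

theorem refl (s : Finset ℕ) : FinInitSeg s s :=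
  ⟨Subset.rfl, fun _ _ _ hb hbs => absurd hb hbs⟩

theorem empty (t : Finset ℕ) : FinInitSeg ∅ t :=
  ⟨empty_subset t, by simp⟩

theorem trans {r s t : Finset ℕ} (hrs : FinInitSeg r s) (hst : FinInitSeg s t) :
    FinInitSeg r t := by
  refine ⟨hrs.1.trans hst.1, fun a ha b hb hbr => ?_⟩
  by_cases hbs : b ∈ s
  · exact hrs.2 a ha b hbs hbr
  · exact hst.2 a (hrs.1 ha) b hb hbs

theorem self_insert {s : Finset ℕ} {n : ℕ} (h : ∀ a ∈ s, a < n) : FinInitSeg s (insert n s) :=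
  ⟨subset_insert n s, fun a ha b hb hbs => by
    obtain rfl := (mem_insert.1 hb).resolve_right hbs
    exact h a ha⟩

theorem insert_min' {s t : Finset ℕ} (h : FinInitSeg s t) (hne : (t \ s).Nonempty) :
    FinInitSeg (insert ((t \ s).min' hne) s) t := by
  set n := (t \ s).min' hne
  have hn : n ∈ t \ s := min'_mem _ hne
  refine ⟨insert_subset (mem_sdiff.1 hn).1 h.1, fun a ha b hb hbn => ?_⟩
  have hbs : b ∉ s := fun hbs => hbn (mem_insert_of_mem hbs)
  have hnb : n < b := lt_of_le_of_ne (min'_le _ b (mem_sdiff.2 ⟨hb, hbs⟩))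
    fun h => hbn (h ▸ mem_insert_self n s)
  rcases mem_insert.1 ha with rfl | ha
  · exact hnb
  · exact h.2 a ha b hb hbs

end FinInitSeg

section Diagonalization

theorem exists_infinite_forall_finset_subset {P : Finset ℕ → Prop} (h₀ : P ∅)
    (hstep : ∀ d, P d → ∃ n, (∀ a ∈ d, a < n) ∧ P (insert n d)) :
    ∃ C : Set ℕ, C.Infinite ∧ ∀ s : Finset ℕ, ↑s ⊆ C → ∃ d, s ⊆ d ∧ P d := by
  choose! next hlt hP using hstep
  let D : ℕ → Finset ℕ := fun k => (fun d => insert (next d) d)^[k] ∅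
  have hDsucc : ∀ k, D (k + 1) = insert (next (D k)) (D k) := fun k =>
    Function.iterate_succ_apply' _ k ∅
  have hD : ∀ k, P (D k) := by
    intro k
    induction k with
    | zero => exact h₀
    | succ k ih => rw [hDsucc]; exact hP _ ih
  have hDmono : Monotone D := monotone_nat_of_le_succ fun k => hDsucc k ▸ subset_insert _ _
  let c : ℕ → ℕ := fun k => next (D k)
  have hcD : ∀ k, c k ∈ D (k + 1) := fun k => hDsucc k ▸ mem_insert_self _ _
  have hc : StrictMono c := strictMono_nat_of_lt_succ fun k => hlt _ (hD (k + 1)) _ (hcD k)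
  refine ⟨Set.range c, Set.infinite_range_of_injective hc.injective, fun s hs =>
    ⟨D (s.sup id + 1), fun x hx => ?_, hD _⟩⟩
  obtain ⟨k, rfl⟩ := hs hx
  exact hDmono (Nat.succ_le_succ ((hc.id_le k).trans (le_sup (f := id) hx))) (hcD k)

variable {Q : Finset ℕ → Set ℕ → Prop}

theorem exists_subset_infinite_forall_mem (hmono : ∀ s X Y, Y ⊆ X → Q s X → Q s Y)
    (hdense : ∀ s X, X.Infinite → ∃ Y ⊆ X, Y.Infinite ∧ Q s Y)
    (S : Finset (Finset ℕ)) {X : Set ℕ} (hX : X.Infinite) :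
    ∃ Y ⊆ X, Y.Infinite ∧ ∀ s ∈ S, Q s Y := by
  classical
  induction S using Finset.induction_on with
  | empty => exact ⟨X, subset_rfl, hX, by simp⟩
  | insert s S _ ih =>
    obtain ⟨Y, hYX, hY, hYS⟩ := ih
    obtain ⟨Z, hZY, hZ, hZs⟩ := hdense s Y hY
    refine ⟨Z, hZY.trans hYX, hZ, fun r hr => ?_⟩
    rcases mem_insert.1 hr with rfl | hr
    exacts [hZs, hmono r Y Z hZY (hYS r hr)]

theorem exists_subset_infinite_forall_finset (hmono : ∀ s X Y, Y ⊆ X → Q s X → Q s Y)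
    (htail : ∀ s X, Q s {x ∈ X | ∀ a ∈ s, a < x} → Q s X)
    (hdense : ∀ s X, X.Infinite → ∃ Y ⊆ X, Y.Infinite ∧ Q s Y)
    {A : Set ℕ} (hA : A.Infinite) :
    ∃ B ⊆ A, B.Infinite ∧ ∀ s : Finset ℕ, ↑s ⊆ B → Q s B := by
  obtain ⟨X₀, hX₀A, hX₀, hQ₀⟩ := hdense ∅ A hA
  -- Each set of the fusion sequence settles all subsets of `{0, …, min}` of its predecessor.
  choose! next hnext_sub hnext_inf hnext using fun X (hX : X.Infinite) =>
    exists_subset_infinite_forall_mem hmono hdense (range (sInf X + 1)).powerset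
      (hX.sdiff (Set.finite_Iic (sInf X)))
  let X : ℕ → Set ℕ := fun n => next^[n] X₀
  have hXsucc : ∀ n, X (n + 1) = next (X n) := fun n => Function.iterate_succ_apply' _ n X₀
  have hX : ∀ n, (X n).Infinite := by
    intro n
    induction n with
    | zero => exact hX₀
    | succ n ih => rw [hXsucc]; exact hnext_inf _ ih
  let b : ℕ → ℕ := fun n => sInf (X n)
  have hbX : ∀ n, b n ∈ X n := fun n => Nat.sInf_mem (hX n).nonempty
  have hXanti : Antitone X := antitone_nat_of_succ_le fun n =>
    hXsucc n ▸ (hnext_sub _ (hX n)).trans Set.sdiff_subset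
  have hb : StrictMono b := strictMono_nat_of_lt_succ fun n =>
    not_le.1 (hnext_sub _ (hX n) (hXsucc n ▸ hbX (n + 1))).2
  have hBX₀ : Set.range b ⊆ X₀ := by
    rintro _ ⟨n, rfl⟩
    exact hXanti (Nat.zero_le n) (hbX n)
  refine ⟨Set.range b, hBX₀.trans hX₀A, Set.infinite_range_of_injective hb.injective,
    fun s hs => ?_⟩
  rcases s.eq_empty_or_nonempty with rfl | hne
  · exact hmono ∅ X₀ _ hBX₀ hQ₀
  obtain ⟨n, hn⟩ := hs (s.max'_mem hne)
  refine htail s _ (hmono s (X (n + 1)) _ ?_ ?_)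
  · rintro _ ⟨⟨m, rfl⟩, hm⟩
    exact hXanti (hb.lt_iff_lt.1 (hn ▸ hm _ (s.max'_mem hne))) (hbX m)
  · rw [hXsucc]
    exact hnext _ (hX n) s (mem_powerset.2 fun a ha =>
      mem_range.2 (Nat.lt_succ_of_le ((s.le_max' a ha).trans_eq hn.symm)))

end Diagonalization

namespace NashWilliams

variable (F F₀ : Set (Finset ℕ))

def Accepts (X : Set ℕ) (s : Finset ℕ) : Prop :=
  ∀ t ∈ F, FinInitSeg s t → ↑(t \ s) ⊆ X → t ∈ F₀

def Rejects (X : Set ℕ) (s : Finset ℕ) : Prop :=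
  ∀ Y ⊆ X, Y.Infinite → ¬ Accepts F F₀ Y s

def Decides (X : Set ℕ) (s : Finset ℕ) : Prop :=
  Accepts F F₀ X s ∨ Rejects F F₀ X s

variable {F F₀}

theorem Accepts.mono {X Y : Set ℕ} {s : Finset ℕ} (h : Accepts F F₀ X s) (hYX : Y ⊆ X) :
    Accepts F F₀ Y s :=
  fun t ht hst htY => h t ht hst (htY.trans hYX)

theorem Rejects.mono {X Y : Set ℕ} {s : Finset ℕ} (h : Rejects F F₀ X s) (hYX : Y ⊆ X) :
    Rejects F F₀ Y s :=
  fun Z hZY => h Z (hZY.trans hYX)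

theorem Decides.mono {X Y : Set ℕ} {s : Finset ℕ} (h : Decides F F₀ X s) (hYX : Y ⊆ X) :
    Decides F F₀ Y s :=
  h.imp (·.mono hYX) (·.mono hYX)

theorem exists_subset_infinite_decides (s : Finset ℕ) {X : Set ℕ} (hX : X.Infinite) :
    ∃ Y ⊆ X, Y.Infinite ∧ Decides F F₀ Y s := by
  by_cases h : Rejects F F₀ X s
  · exact ⟨X, subset_rfl, hX, Or.inr h⟩
  · simp only [Rejects, not_forall, not_not] at h
    obtain ⟨Y, hYX, hY, hacc⟩ := h
    exact ⟨Y, hYX, hY, Or.inl hacc⟩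

theorem Decides.of_tail {X : Set ℕ} {s : Finset ℕ}
    (h : Decides F F₀ {x ∈ X | ∀ a ∈ s, a < x} s) : Decides F F₀ X s := by
  rcases h with hacc | hrej
  · refine Or.inl fun t ht hst htX => hacc t ht hst fun x hx => ?_
    have hx' := Finset.mem_sdiff.1 (mem_coe.1 hx)
    exact ⟨htX hx, fun a ha => hst.2 a ha x hx'.1 hx'.2⟩
  · refine Or.inr fun Y hYX hY hacc => ?_
    have htail : {x ∈ Y | ∀ a ∈ s, a < x}.Infinite :=
      (hY.sdiff (Set.finite_Iic (s.sup id))).mono fun x hx =>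
        ⟨hx.1, fun a ha => (le_sup (f := id) ha).trans_lt (not_le.1 hx.2)⟩
    exact hrej _ (fun x hx => ⟨hYX hx.1, hx.2⟩) htail (hacc.mono fun x hx => hx.1)

theorem exists_subset_infinite_forall_decides {A : Set ℕ} (hA : A.Infinite) :
    ∃ B ⊆ A, B.Infinite ∧ ∀ s : Finset ℕ, ↑s ⊆ B → Decides F F₀ B s :=
  exists_subset_infinite_forall_finset (fun _ _ _ hYX h => h.mono hYX)
    (fun _ _ => Decides.of_tail) (fun s _ hX => exists_subset_infinite_decides s hX) hA

theorem Rejects.eventually_rejects_insert {B : Set ℕ} {s : Finset ℕ}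
    (hdec : ∀ r : Finset ℕ, ↑r ⊆ B → Decides F F₀ B r) (hsB : ↑s ⊆ B) (hsF : s ∉ F)
    (hrej : Rejects F F₀ B s) : ∀ᶠ n in atTop, n ∈ B → Rejects F F₀ B (insert n s) := by
  by_contra hfreq
  set Y := {n ∈ B | (∀ a ∈ s, a < n) ∧ ¬ Rejects F F₀ B (insert n s)}
  have hY : Y.Infinite := by
    refine Nat.frequently_atTop_iff_infinite.1 ((not_eventually.1 hfreq).and_eventually
      ((eventually_all_finset s).2 fun a _ => eventually_gt_atTop a) |>.mono ?_)
    intro n ⟨hn, hgt⟩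
    simp only [Classical.not_imp] at hn
    exact ⟨hn.1, hgt, hn.2⟩
  refine hrej Y (fun n hn => hn.1) hY fun t ht hst htY => ?_
  have hne : (t \ s).Nonempty := sdiff_nonempty.2 fun hts => hsF (subset_antisymm hts hst.1 ▸ ht)
  have hnY : (t \ s).min' hne ∈ Y := htY (min'_mem _ hne)
  have hacc := (hdec _ (by push_cast; exact Set.insert_subset hnY.1 hsB)).resolve_right hnY.2.2
  refine hacc t ht (hst.insert_min' hne) fun x hx => (htY ?_).1
  simp only [coe_sdiff, coe_insert, Set.mem_sdiff, Set.mem_insert_iff, not_or] at hx ⊢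
  exact ⟨hx.1, hx.2.2⟩

theorem exists_gt_forall_rejects_insert {B : Set ℕ} (hB : B.Infinite)
    (hdec : ∀ s : Finset ℕ, ↑s ⊆ B → Decides F F₀ B s) {d : Finset ℕ} (hdB : ↑d ⊆ B)
    (hd : ∀ s ⊆ d, (∀ t ∈ F, FinInitSeg t s → t = s) → Rejects F F₀ B s) :
    ∃ n ∈ B, (∀ a ∈ d, a < n) ∧
      ∀ s ⊆ insert n d, (∀ t ∈ F, FinInitSeg t s → t = s) → Rejects F F₀ B s := by
  have hfree : ∀ᶠ n in atTop, ∀ s ∈ d.powerset, (∀ t ∈ F, ¬ FinInitSeg t s) →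
      n ∈ B → Rejects F F₀ B (insert n s) := by
    refine (eventually_all_finset _).2 fun s hs => ?_
    by_cases hsF : ∀ t ∈ F, ¬ FinInitSeg t s
    · have hsd := mem_powerset.1 hs
      have hrej := hd s hsd fun t ht hts => absurd hts (hsF t ht)
      filter_upwards [hrej.eventually_rejects_insert hdec ((coe_subset.2 hsd).trans hdB)
        fun h => hsF s h (.refl s)] with n hn using fun _ => hn
    · exact Eventually.of_forall fun _ h => absurd h hsF
  have hgt : ∀ᶠ n in atTop, ∀ a ∈ d, a < n :=
    (eventually_all_finset d).2 fun a _ => eventually_gt_atTop a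
  obtain ⟨n, hnB, hn, hnd⟩ :=
    ((Nat.frequently_atTop_iff_infinite.2 hB).and_eventually (hfree.and hgt)).exists
  refine ⟨n, hnB, hnd, fun s hs hmin => ?_⟩
  by_cases hns : n ∈ s
  · have hsd : s.erase n ⊆ d := subset_insert_iff.1 hs
    rw [← insert_erase hns] at hmin ⊢
    -- An initial segment of `s \ {n}` in `F` would be a proper initial segment of `s`.
    refine hn (s.erase n) (mem_powerset.2 hsd) (fun t ht hts => ?_) hnB
    have hts' := hmin t ht (hts.trans (.self_insert fun a ha => hnd a (hsd ha)))
    exact notMem_erase n s (hts.1 (hts' ▸ mem_insert_self n _))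
  · exact hd s ((subset_insert_iff_of_notMem hns).1 hs) hmin

theorem exists_subset_infinite_forall_rejects {B : Set ℕ} (hB : B.Infinite)
    (hdec : ∀ s : Finset ℕ, ↑s ⊆ B → Decides F F₀ B s) (hrej : Rejects F F₀ B ∅) :
    ∃ C ⊆ B, C.Infinite ∧ ∀ s : Finset ℕ, ↑s ⊆ C →
      (∀ t ∈ F, FinInitSeg t s → t = s) → Rejects F F₀ B s := by
  obtain ⟨C, hC, hCP⟩ := exists_infinite_forall_finset_subset
    (P := fun d => ↑d ⊆ B ∧ ∀ s ⊆ d, (∀ t ∈ F, FinInitSeg t s → t = s) → Rejects F F₀ B s)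
    ⟨by simp, fun s hs _ => subset_empty.1 hs ▸ hrej⟩
    fun d hd => by
      obtain ⟨n, hnB, hnd, hrej_insert⟩ := exists_gt_forall_rejects_insert hB hdec hd.1 hd.2
      exact ⟨n, hnd, by push_cast; exact Set.insert_subset hnB hd.1, hrej_insert⟩
  refine ⟨C, fun x hx => ?_, hC, fun s hs hmin => ?_⟩
  · obtain ⟨d, hxd, hd⟩ := hCP {x} (by simpa using hx)
    exact hd.1 (hxd (mem_singleton_self x))
  · obtain ⟨d, hsd, hd⟩ := hCP s hs
    exact hd.2 s hsd hmin

theorem Rejects.notMem (hF : IsThin F) {B : Set ℕ} (hB : B.Infinite) {s : Finset ℕ}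
    (hs : s ∈ F) (hrej : Rejects F F₀ B s) : s ∉ F₀ := fun hs₀ =>
  hrej B subset_rfl hB fun t ht hst _ => by
    obtain rfl : s = t := by_contra fun hne => hF s hs t ht hne hst
    exact hs₀

end NashWilliams

open NashWilliams in
theorem stmt_18_general (F F0 F1 : Set (Finset ℕ)) (A : Set ℕ) (hA : A.Infinite)
    (hNW : ∀ s ∈ F, ∀ t ∈ F, s ≠ t → ¬ FinInitSeg s t)
    (hpart : F = F0 ∪ F1) :
    ∃ B : Set ℕ, B ⊆ A ∧ B.Infinite ∧
      ((∀ s ∈ F, ↑s ⊆ B → s ∈ F0) ∨ (∀ s ∈ F, ↑s ⊆ B → s ∈ F1)) := by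
  obtain ⟨B, hBA, hB, hdec⟩ := exists_subset_infinite_forall_decides (F := F) (F₀ := F0) hA
  rcases hdec ∅ (by simp) with hacc | hrej
  · exact ⟨B, hBA, hB, Or.inl fun s hs hsB => hacc s hs (.empty s) (by simpa using hsB)⟩
  obtain ⟨C, hCB, hC, hCrej⟩ := exists_subset_infinite_forall_rejects hB hdec hrej
  refine ⟨C, hCB.trans hBA, hC, Or.inr fun s hs hsC => ?_⟩
  have hmin : ∀ t ∈ F, FinInitSeg t s → t = s := fun t ht hts =>
    by_contra fun hne => hNW t ht s hs hne hts
  have hs₀ := (hCrej s hsC hmin).notMem hNW hB hs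
  rw [hpart] at hs
  exact hs.resolve_left hs₀

/-- Nash-Williams theorem: if `F` is a Nash-Williams family of finite subsets
of ω which is a front on an infinite set `A`, then for every partition `F = F0 ∪ F1` there
is an infinite `B ⊆ A` such that every member of `F` included in `B` lies in a single piece. -/
theorem stmt_18 (F F0 F1 : Set (Finset ℕ)) (A : Set ℕ) (hA : A.Infinite)
    (hNW : ∀ s ∈ F, ∀ t ∈ F, s ≠ t → ¬ FinInitSeg s t)
    (hfront : ∀ X : Set ℕ, X ⊆ A → X.Infinite → ∃ s ∈ F, SetInitSeg s X)
    (hpart : F = F0 ∪ F1) :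
    ∃ B : Set ℕ, B ⊆ A ∧ B.Infinite ∧
      ((∀ s ∈ F, ↑s ⊆ B → s ∈ F0) ∨ (∀ s ∈ F, ↑s ⊆ B → s ∈ F1)) :=
  stmt_18_general F F0 F1 A hA hNW hpart
end
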